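/- arXiv:1901.02743 — 2 statements merged into one kernel-verified Lean document; each statement's English description precedes it below -/
import Mathlib

section
/- The A₁-type Macdonald polynomial M_n(x; q, t) is an eigenfunction of the Macdonald q-difference operator: if D f(x) = ((t x − t⁻¹ x⁻¹)/(x − x⁻¹))·f(qx) + ((t⁻¹ x − t x⁻¹)/(x − x⁻¹))·f(q⁻¹x), then D M_n(·; q, t)(x) = (t q^n + t⁻¹ q^{−n})·M_n(x; q, t). -/
/-!
Write `M_n(x) = K · ∑_{j+k=n} w_j w_k x^{j-k}` with `w_m = (t²;q²)_m / (q²;q²)_m`, and let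
`λ = t qⁿ + t⁻¹ q⁻ⁿ`. On a monomial,
`(x - x⁻¹)(D - λ) x^{j-k} = -(t qⁿ)⁻¹ ((1 - q^{2k})(1 - t² q^{2j}) x^{j-k+1}
  - (1 - q^{2j})(1 - t² q^{2k}) x^{j-k-1})`,
and after weighting by `w_j w_k` these terms telescope to zero, because
`w_{m+1} (1 - q^{2(m+1)}) = w_m (1 - t² q^{2m})`.
-/

/-- The finite q-Pochhammer symbol `(a;q)_n = ∏_{j=0}^{n-1} (1 − a q^j)`. -/
noncomputable def qPoch (a q : ℂ) (n : ℕ) : ℂ := ∏ j ∈ Finset.range n, (1 - a * q ^ j)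

/-- The `A₁`-type Macdonald polynomial. -/
noncomputable def macdonaldA1 (n : ℕ) (x q t : ℂ) : ℂ :=
  qPoch (q ^ 2) (q ^ 2) n / qPoch (t ^ 2) (q ^ 2) n *
    ∑ j ∈ Finset.range (n + 1),
      qPoch (t ^ 2) (q ^ 2) j * qPoch (t ^ 2) (q ^ 2) (n - j) /
          (qPoch (q ^ 2) (q ^ 2) j * qPoch (q ^ 2) (q ^ 2) (n - j)) *
        x ^ ((j : ℤ) - ((n : ℤ) - (j : ℤ)))

open Finset

lemma qPoch_succ (a q : ℂ) (m : ℕ) : qPoch a q (m + 1) = qPoch a q m * (1 - a * q ^ m) :=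
  prod_range_succ _ _

noncomputable def qBinomialWeight (a q : ℂ) (m : ℕ) : ℂ := qPoch a q m / qPoch q q m

lemma qBinomialWeight_succ_mul (a q : ℂ) (m : ℕ) (h : qPoch q q (m + 1) ≠ 0) :
    qBinomialWeight a q (m + 1) * (1 - q ^ (m + 1)) =
      qBinomialWeight a q m * (1 - a * q ^ m) := by
  rw [qPoch_succ, ← pow_succ'] at h
  obtain ⟨hm, hlast⟩ := mul_ne_zero_iff.1 h
  rw [qBinomialWeight, qBinomialWeight, qPoch_succ, qPoch_succ, ← pow_succ']
  field_simp

def weightedLaurentSum {K : Type*} [Field K] (w : ℕ → K) (n : ℕ) (y : K) : K :=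
  ∑ j ∈ range (n + 1), w j * w (n - j) * y ^ ((j : ℤ) - ((n : ℤ) - j))

lemma macdonaldA1_eq (n : ℕ) (x q t : ℂ) :
    macdonaldA1 n x q t = qPoch (q ^ 2) (q ^ 2) n / qPoch (t ^ 2) (q ^ 2) n *
      weightedLaurentSum (qBinomialWeight (t ^ 2) (q ^ 2)) n x := by
  simp only [macdonaldA1, weightedLaurentSum, qBinomialWeight, mul_div_mul_comm]

lemma sum_range_succ_eq_of_shift {M : Type*} [AddCommMonoid M] {u v : ℕ → M} {n : ℕ}
    (hu : u n = 0) (hv : v 0 = 0) (h : ∀ j < n, u j = v (j + 1)) :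
    ∑ j ∈ range (n + 1), u j = ∑ j ∈ range (n + 1), v j := by
  rw [sum_range_succ, hu, sum_range_succ', hv, add_zero, add_zero]
  exact sum_congr rfl fun j hj => h j (mem_range.1 hj)

lemma mul_mul_shift_of_succ_mul {R : Type*} [CommRing R] {w : ℕ → R} {a Q : R}
    (hw : ∀ m, w (m + 1) * (1 - Q ^ (m + 1)) = w m * (1 - a * Q ^ m)) (j k : ℕ) :
    w j * w (k + 1) * ((1 - Q ^ (k + 1)) * (1 - a * Q ^ j)) =
      w (j + 1) * w k * ((1 - Q ^ (j + 1)) * (1 - a * Q ^ k)) := by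
  linear_combination (w j * (1 - a * Q ^ j)) * hw k - (w k * (1 - a * Q ^ k)) * hw j

lemma sum_weight_telescope {K : Type*} [Field K] {w : ℕ → K} {a Q : K}
    (hw : ∀ m, w (m + 1) * (1 - Q ^ (m + 1)) = w m * (1 - a * Q ^ m)) (n : ℕ) (x : K) :
    ∑ j ∈ range (n + 1), w j * w (n - j) *
        ((1 - Q ^ (n - j)) * (1 - a * Q ^ j) * x ^ ((j : ℤ) - ((n : ℤ) - j) + 1)) =
      ∑ j ∈ range (n + 1), w j * w (n - j) *
        ((1 - Q ^ j) * (1 - a * Q ^ (n - j)) * x ^ ((j : ℤ) - ((n : ℤ) - j) - 1)) := by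
  refine sum_range_succ_eq_of_shift (by simp) (by simp) fun j hj => ?_
  obtain ⟨k, rfl⟩ : ∃ k, n = j + k + 1 := ⟨n - j - 1, by omega⟩
  have hexp : (j : ℤ) - ((↑(j + k + 1) : ℤ) - j) + 1 =
      ↑(j + 1) - (↑(j + k + 1) - ↑(j + 1)) - 1 := by
    push_cast; ring
  rw [show j + k + 1 - j = k + 1 by omega, show j + k + 1 - (j + 1) = k by omega, hexp]
  linear_combination x ^ ((↑(j + 1) : ℤ) - (↑(j + k + 1) - ↑(j + 1)) - 1) *
    mul_mul_shift_of_succ_mul hw j k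

lemma macdonaldOp_zpow {K : Type*} [Field K] {x q t : K} (hx : x ≠ 0) (hq : q ≠ 0) (ht : t ≠ 0)
    {j n : ℕ} (hj : j ≤ n) :
    (t * x - t⁻¹ * x⁻¹) * (q * x) ^ ((j : ℤ) - ((n : ℤ) - j)) +
        (t⁻¹ * x - t * x⁻¹) * (q⁻¹ * x) ^ ((j : ℤ) - ((n : ℤ) - j)) -
        (t * q ^ n + t⁻¹ * (q ^ n)⁻¹) * (x - x⁻¹) * x ^ ((j : ℤ) - ((n : ℤ) - j)) =
      -(t * q ^ n)⁻¹ *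
        ((1 - (q ^ 2) ^ (n - j)) * (1 - t ^ 2 * (q ^ 2) ^ j) *
            x ^ ((j : ℤ) - ((n : ℤ) - j) + 1) -
          (1 - (q ^ 2) ^ j) * (1 - t ^ 2 * (q ^ 2) ^ (n - j)) *
            x ^ ((j : ℤ) - ((n : ℤ) - j) - 1)) := by
  obtain ⟨l, rfl⟩ := Nat.exists_eq_add_of_le hj
  have hexp : (j : ℤ) - ((↑(j + l) : ℤ) - j) = (j : ℤ) - (l : ℤ) := by push_cast; ring
  rw [Nat.add_sub_cancel_left, hexp, zpow_add_one₀ hx, zpow_sub_one₀ hx, mul_zpow, mul_zpow,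
    inv_zpow, zpow_sub₀ hq, zpow_natCast, zpow_natCast]
  field_simp
  ring

lemma macdonaldOp_weightedLaurentSum {K : Type*} [Field K] {w : ℕ → K} {x q t : K}
    (hx : x ≠ 0) (hq : q ≠ 0) (ht : t ≠ 0)
    (hw : ∀ m, w (m + 1) * (1 - (q ^ 2) ^ (m + 1)) = w m * (1 - t ^ 2 * (q ^ 2) ^ m)) (n : ℕ) :
    (t * x - t⁻¹ * x⁻¹) * weightedLaurentSum w n (q * x) +
        (t⁻¹ * x - t * x⁻¹) * weightedLaurentSum w n (q⁻¹ * x) =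
      (t * q ^ n + t⁻¹ * (q ^ n)⁻¹) * (x - x⁻¹) * weightedLaurentSum w n x := by
  have htele := sum_weight_telescope hw n x
  rw [← sub_eq_zero, ← sum_sub_distrib] at htele
  rw [← sub_eq_zero, ← mul_zero (-(t * q ^ n)⁻¹), ← htele]
  simp only [weightedLaurentSum, mul_sum]
  rw [← sum_add_distrib, ← sum_sub_distrib]
  refine sum_congr rfl fun j hj => ?_
  linear_combination w j * w (n - j) * macdonaldOp_zpow hx hq ht (mem_range_succ_iff.1 hj)

lemma sub_inv_ne_zero {K : Type*} [Field K] {x : K} (hx0 : x ≠ 0) (hx1 : x ≠ 1) (hx2 : x ≠ -1) :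
    x - x⁻¹ ≠ 0 := by
  have h : x - x⁻¹ = (x - 1) * (x + 1) / x := by field_simp; ring
  rw [h]
  exact div_ne_zero (mul_ne_zero (sub_ne_zero.2 hx1) (by rwa [ne_eq, add_eq_zero_iff_eq_neg])) hx0

theorem macdonaldA1_eigen_general (n : ℕ) (x q t : ℂ)
    (hx0 : x ≠ 0) (hx1 : x ≠ 1) (hx2 : x ≠ -1) (hq0 : q ≠ 0) (ht0 : t ≠ 0)
    (hqp : ∀ m : ℕ, qPoch (q ^ 2) (q ^ 2) m ≠ 0) :
    (t * x - t⁻¹ * x⁻¹) / (x - x⁻¹) * macdonaldA1 n (q * x) q t +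
        (t⁻¹ * x - t * x⁻¹) / (x - x⁻¹) * macdonaldA1 n (q⁻¹ * x) q t =
      (t * q ^ n + t⁻¹ * (q ^ n)⁻¹) * macdonaldA1 n x q t := by
  have hw := fun m => qBinomialWeight_succ_mul (t ^ 2) (q ^ 2) m (hqp (m + 1))
  rw [macdonaldA1_eq, macdonaldA1_eq, macdonaldA1_eq]
  generalize qPoch (q ^ 2) (q ^ 2) n / qPoch (t ^ 2) (q ^ 2) n = K
  rw [div_mul_eq_mul_div, div_mul_eq_mul_div, ← add_div,
    div_eq_iff (sub_inv_ne_zero hx0 hx1 hx2)]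
  linear_combination K * macdonaldOp_weightedLaurentSum hx0 hq0 ht0 hw n

/-- `M_n(x;q,t)` is an eigenfunction of the Macdonald q-difference operator
`D f(x) = ((t x − t⁻¹x⁻¹)/(x − x⁻¹)) f(qx) + ((t⁻¹x − t x⁻¹)/(x − x⁻¹)) f(q⁻¹x)`,
with eigenvalue `t q^n + t⁻¹ q^{−n}`. -/
theorem macdonaldA1_eigen (n : ℕ) (x q t : ℂ)
    (hx0 : x ≠ 0) (hx1 : x ≠ 1) (hx2 : x ≠ -1) (hq0 : q ≠ 0) (ht0 : t ≠ 0)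
    (hqp : ∀ m : ℕ, qPoch (q ^ 2) (q ^ 2) m ≠ 0)
    (htp : ∀ m : ℕ, qPoch (t ^ 2) (q ^ 2) m ≠ 0) :
    (t * x - t⁻¹ * x⁻¹) / (x - x⁻¹) * macdonaldA1 n (q * x) q t +
        (t⁻¹ * x - t * x⁻¹) / (x - x⁻¹) * macdonaldA1 n (q⁻¹ * x) q t =
      (t * q ^ n + t⁻¹ * (q ^ n)⁻¹) * macdonaldA1 n x q t :=
  macdonaldA1_eigen_general n x q t hx0 hx1 hx2 hq0 ht0 hqp
end

section
/- In the polynomial representation of the A₁-type DAHA, the operators M_{(1,0)} = X + X⁻¹, M_{(0,1)} = Y + Y⁻¹, M_{(1,1)} = q^{1/2}XY + (q^{1/2}XY)⁻¹ satisfy the relation q^{−1/2}·M_{(1,0)}·M_{(0,1)} − q^{1/2}·M_{(0,1)}·M_{(1,0)} = (q⁻¹ − q)·M_{(1,1)}, realizing the skein relation A·x·y − A⁻¹·y·x = (A² − A⁻²)·z of the once-punctured torus with A = q^{−1/2}. -/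
/-!
On functions invariant under `x ↦ x⁻¹` the Hecke operator `T` acts by `t⁻¹`, so `Y` is a pure
`q`-shift and `Y + Y⁻¹` is the Macdonald operator `g ↦ c(t,x) g(qx) + c(t⁻¹,x) g(q⁻¹x)`.
Evaluating both sides of the relation on such an `f` therefore gives linear combinations of
`f(qx)` and `f(q⁻¹x)` alone; `M_{(1,1)} f` comes out as
`v (x c(t,x) f(qx) + x⁻¹ c(t⁻¹,x) f(q⁻¹x))`, and comparing the two coefficients is a
Laurent-polynomial identity in `v` with `q = v²`.
-/

noncomputable section

/-- Polynomial representation of `T`: `T = t⁻¹ s + (t⁻¹ − t)(x² − 1)⁻¹(s − 1)`. -/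
def THeckeOp (t : ℂ) (f : ℂ → ℂ) : ℂ → ℂ := fun x =>
  t⁻¹ * f x⁻¹ + (t⁻¹ - t) * (x ^ 2 - 1)⁻¹ * (f x⁻¹ - f x)

/-- The inverse of `T`: `T⁻¹ = T + (t − t⁻¹)` (from the Hecke relation). -/
def THeckeOpInv (t : ℂ) (f : ℂ → ℂ) : ℂ → ℂ := fun x => THeckeOp t f x + (t - t⁻¹) * f x

/-- The Dunkl–Cherednik operator `Y = ∂·s·T`, `(Y f)(x) = (T f)((qx)⁻¹)`. -/
def Yop (q t : ℂ) (f : ℂ → ℂ) : ℂ → ℂ := fun x => THeckeOp t f ((q * x)⁻¹)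

/-- The inverse Dunkl–Cherednik operator `Y⁻¹ = T⁻¹·s·∂⁻¹`. -/
def YopInv (q t : ℂ) (f : ℂ → ℂ) : ℂ → ℂ := THeckeOpInv t fun y => f (q⁻¹ * y⁻¹)

/-- Multiplication by `x`. -/
def Xop (f : ℂ → ℂ) : ℂ → ℂ := fun x => x * f x

/-- Multiplication by `x⁻¹`. -/
def XopInv (f : ℂ → ℂ) : ℂ → ℂ := fun x => x⁻¹ * f x

/-- Away from `x ∈ {0, ±1}` this is the Macdonald coefficient `(t x − t⁻¹ x⁻¹) / (x − x⁻¹)`;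
written with `(x² − 1)⁻¹` as the only denominator, the identities below hold for every `x`. -/
def macdonaldCoeff (t x : ℂ) : ℂ := t + (t - t⁻¹) * (x ^ 2 - 1)⁻¹

section Symmetric

variable {g : ℂ → ℂ} (hg : ∀ y : ℂ, g y⁻¹ = g y)
include hg

theorem THeckeOp_of_symm (t x : ℂ) : THeckeOp t g x = t⁻¹ * g x := by
  simp only [THeckeOp, hg, sub_self, mul_zero, add_zero]

theorem Yop_of_symm (q t x : ℂ) : Yop q t g x = t⁻¹ * g (q * x) := by
  rw [Yop, THeckeOp_of_symm hg, hg]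

theorem Yop_add_YopInv_of_symm (q t x : ℂ) :
    Yop q t g x + YopInv q t g x =
      macdonaldCoeff t x * g (q * x) + macdonaldCoeff t⁻¹ x * g (q⁻¹ * x) := by
  have hsymm : g (q⁻¹ * x⁻¹) = g (q * x) := by rw [← mul_inv, hg]
  simp only [Yop_of_symm hg, YopInv, THeckeOpInv, THeckeOp, inv_inv, hsymm, macdonaldCoeff]
  ring

theorem YopInv_XopInv_of_symm (q t x : ℂ) :
    YopInv q t (XopInv g) x =
      q * (x * (macdonaldCoeff t x - t⁻¹) * g (q * x) +
        x⁻¹ * macdonaldCoeff t⁻¹ x * g (q⁻¹ * x)) := by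
  have hsymm : g (q⁻¹ * x⁻¹) = g (q * x) := by rw [← mul_inv, hg]
  simp only [YopInv, THeckeOpInv, THeckeOp, XopInv, inv_inv, hsymm, macdonaldCoeff, mul_inv]
  ring

end Symmetric

theorem daha_A1_skein_relation_general (q t v : ℂ) (hv0 : v ≠ 0) (hv : v ^ 2 = q)
    (f : ℂ → ℂ) (hf : ∀ y : ℂ, f y⁻¹ = f y) (x : ℂ) :
    let M10 : (ℂ → ℂ) → (ℂ → ℂ) := fun g y => Xop g y + XopInv g y
    let M01 : (ℂ → ℂ) → (ℂ → ℂ) := fun g y => Yop q t g y + YopInv q t g y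
    let M11 : (ℂ → ℂ) → (ℂ → ℂ) := fun g y =>
      v * Xop (Yop q t g) y + v⁻¹ * YopInv q t (XopInv g) y
    v⁻¹ * M10 (M01 f) x - v * M01 (M10 f) x = (q⁻¹ - q) * M11 f x := by
  intro M10 M01 M11
  have hM10f : ∀ y : ℂ, M10 f y⁻¹ = M10 f y := fun y => by
    simp only [M10, Xop, XopInv, inv_inv, hf]; ring
  simp only [M01, M11]
  rw [Yop_add_YopInv_of_symm hM10f]
  simp only [M10, Xop, XopInv]
  rw [Yop_add_YopInv_of_symm hf, Yop_of_symm hf, YopInv_XopInv_of_symm hf]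
  subst hv
  field_simp
  ring

/-- In the polynomial representation of the `A₁`-type DAHA, restricted to the symmetric
subspace `ℂ[x + x⁻¹]`, the operators `M_{(1,0)} = X + X⁻¹`, `M_{(0,1)} = Y + Y⁻¹`,
`M_{(1,1)} = q^{1/2}XY + (q^{1/2}XY)⁻¹` satisfy
`q^{−1/2}·M_{(1,0)}·M_{(0,1)} − q^{1/2}·M_{(0,1)}·M_{(1,0)} = (q⁻¹ − q)·M_{(1,1)}`,
realizing the once-punctured-torus skein relation `A·x·y − A⁻¹·y·x = (A² − A⁻²)·z`
with `A = q^{−1/2}` (here `v = q^{1/2}`). -/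
theorem daha_A1_skein_relation (q t v : ℂ) (hq : q ≠ 0) (ht : t ≠ 0)
    (hv0 : v ≠ 0) (hv : v ^ 2 = q)
    (f : ℂ → ℂ) (hf : ∀ y : ℂ, f y⁻¹ = f y)
    (x : ℂ) (hx0 : x ≠ 0) (hx : ∀ m : ℤ, x ≠ q ^ m ∧ x ≠ -q ^ m) :
    let M10 : (ℂ → ℂ) → (ℂ → ℂ) := fun g y => Xop g y + XopInv g y
    let M01 : (ℂ → ℂ) → (ℂ → ℂ) := fun g y => Yop q t g y + YopInv q t g y
    let M11 : (ℂ → ℂ) → (ℂ → ℂ) := fun g y =>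
      v * Xop (Yop q t g) y + v⁻¹ * YopInv q t (XopInv g) y
    v⁻¹ * M10 (M01 f) x - v * M01 (M10 f) x = (q⁻¹ - q) * M11 f x :=
  daha_A1_skein_relation_general q t v hv0 hv f hf x
end
end
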